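/- arXiv:1305.4762 — 3 statements merged into one kernel-verified Lean document; each statement's English description precedes it below -/
import Mathlib

section
/- Let x_1 > x_2 > … be the sequence of atoms (in decreasing order) of a Poisson random measure on (0,∞) with intensity c e^{-c} x^{-2} dx, where c > 0, and for n ≥ 2 set X_n := Σ_i ⌊ (n/ln n) x_i ⌋. Then X_n is almost surely finite, the collection ⌊ (n/ln n) x_i ⌋ (restricted to nonzero values) is the set of atoms of a Poisson random measure on ℕ with intensity m·μ where m = c e^{-c} n/ln n and μ(j) = 1/j - 1/(j+1) for j ∈ ℕ, and X_n has the Luria–Delbrück distribution with parameter m, i.e. E(s^{X_n}) = (1-s)^{m(1-s)/s} for 0 ≤ s ≤ 1. -/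
/-!
The map `y ↦ ⌊a y⌋₊`, `a = n / log n`, carries the Poisson random measure of the `x i` to a
Poisson random measure on `ℕ` (mapping theorem); its mass at `k ≥ 1` is the intensity of
`[k / a, (k + 1) / a)`, namely `c e^{-c} a (1/k - 1/(k+1))`. Only finitely many atoms lie in
`[1 / a, ∞)`, since the mean number of atoms in `[ε, ∞)` is `c e^{-c} / ε < ∞`. Hence
`X_n = ∑_{k ≥ 1} k N_k` with independent `N_k ∼ Poisson(m μ(k))`. Truncating at `k ≤ J`,
independence and the Poisson generating function give, in the limit (dominated convergence),
`E s^{X_n} = exp (m ∑_k μ(k) (s^k - 1))`, and the series of `log (1 - s)` yields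
`∑_{k ≥ 1} (1/k - 1/(k+1)) (s^k - 1) = (1 - s) / s · log (1 - s)`.
-/

open MeasureTheory ProbabilityTheory Filter Real Topology
open scoped ENNReal NNReal

noncomputable section

/-- the intensity measure `c e^{-c} x⁻² dx` on `(0, ∞)`. -/
def intensityMeasure (c : ℝ) : Measure ℝ :=
  (volume.restrict (Set.Ioi (0 : ℝ))).withDensity
    (fun x => ENNReal.ofReal (c * Real.exp (-c) / x ^ 2))

lemma Set.ncard_eq_floor_toReal_tsum_one {α : Type*} (s : Set α) :
    s.ncard = ⌊(∑' _ : s, (1 : ℝ≥0∞)).toReal⌋₊ := by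
  rw [ENNReal.tsum_set_one, Set.ncard_def]
  induction s.encard using ENat.recTopCoe <;> simp

lemma measurable_ncard_setOf_mem {Ω : Type*} [MeasurableSpace Ω] {E : ℕ → Set Ω}
    (hE : ∀ i, MeasurableSet (E i)) : Measurable fun ω => {i | ω ∈ E i}.ncard := by
  have hcount : ∀ ω,
      {i | ω ∈ E i}.ncard = ⌊(∑' i, (E i).indicator (1 : Ω → ℝ≥0∞) ω).toReal⌋₊ := by
    intro ω
    rw [Set.ncard_eq_floor_toReal_tsum_one, tsum_subtype {i | ω ∈ E i} fun _ => (1 : ℝ≥0∞)]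
    rfl
  simp_rw [hcount]
  exact (Measurable.tsum fun i => measurable_one.indicator (hE i)).ennreal_toReal.nat_floor

open Finset in
lemma tsum_natCast_eq_sum_range_mul_ncard {f : ℕ → ℕ} (hf : {i | f i ≠ 0}.Finite) {J : ℕ}
    (hJ : ∀ i, f i ≤ J) :
    ∑' i, (f i : ℝ≥0∞) = ((∑ k ∈ range J, (k + 1) * {i | f i = k + 1}.ncard : ℕ) : ℝ≥0∞) := by
  classical
  rw [tsum_eq_sum (s := hf.toFinset) (by simp), ← Nat.cast_sum]
  congr 1
  have hfiber : ∀ k, {i | f i = k + 1}.ncard = #{i ∈ hf.toFinset | f i - 1 = k} := by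
    intro k
    rw [← Set.ncard_coe_finset]
    congr 1
    ext i
    simp only [Set.mem_ofPred_eq, coe_filter, Set.Finite.mem_toFinset]
    omega
  simp_rw [hfiber]
  rw [← sum_fiberwise_of_maps_to (g := fun i => f i - 1) (t := range J)]
  · refine sum_congr rfl fun k _ => ?_
    rw [sum_congr rfl (g := fun _ => k + 1), sum_const, smul_eq_mul, mul_comm]
    intro i hi
    simp only [mem_filter, Set.Finite.mem_toFinset, Set.mem_ofPred_eq] at hi
    omega
  · intro i hi
    simp only [Set.Finite.mem_toFinset, Set.mem_ofPred_eq] at hi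
    have := hJ i
    simp only [mem_range]
    omega

lemma hasSum_one_div_succ_sub_one_div_succ_succ :
    HasSum (fun k : ℕ => 1 / ((k : ℝ) + 1) - 1 / ((k : ℝ) + 2)) 1 := by
  have hnonneg : ∀ k : ℕ, 0 ≤ 1 / ((k : ℝ) + 1) - 1 / ((k : ℝ) + 2) := fun k =>
    sub_nonneg.2 (one_div_le_one_div_of_le (by positivity) (by linarith))
  rw [hasSum_iff_tendsto_nat_of_nonneg hnonneg]
  have hpartial : ∀ n : ℕ, ∑ k ∈ Finset.range n, (1 / ((k : ℝ) + 1) - 1 / ((k : ℝ) + 2))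
      = 1 - 1 / ((n : ℝ) + 1) := by
    intro n
    induction n with
    | zero => simp
    | succ n ih =>
      rw [Finset.sum_range_succ, ih]
      push_cast
      ring
  simp_rw [hpartial]
  simpa using (tendsto_const_nhds (x := (1 : ℝ))).sub tendsto_one_div_add_atTop_nhds_zero_nat

open Nat in
lemma integral_pow_poissonMeasure (r : ℝ≥0) (t : ℝ) :
    ∫ n, t ^ n ∂poissonMeasure r = exp (r * (t - 1)) := by
  have hterm : ∀ n : ℕ, (exp (-r) * r ^ n / n !) • t ^ n = exp (-r) * ((r * t) ^ n / n !) := by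
    intro n
    rw [smul_eq_mul, mul_pow]
    ring
  have hexp : ∑' n : ℕ, (r * t) ^ n / n ! = exp (r * t) := by
    rw [Real.exp_eq_exp_ℝ, NormedSpace.exp_eq_tsum_div]
  rw [integral_poissonMeasure, tsum_congr hterm, tsum_mul_left, hexp, ← Real.exp_add]
  ring_nf

lemma hasSum_one_div_sub_one_div_succ_mul_pow_sub_one {s : ℝ} (hs0 : 0 < s) (hs1 : s ≤ 1) :
    HasSum (fun k : ℕ => (1 / ((k : ℝ) + 1) - 1 / ((k : ℝ) + 2)) * (s ^ (k + 1) - 1))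
      ((1 - s) / s * log (1 - s)) := by
  rcases hs1.lt_or_eq with hs1 | rfl
  swap
  · simp
  have hlog : HasSum (fun k : ℕ => s ^ (k + 1) / ((k : ℝ) + 1)) (-log (1 - s)) :=
    Real.hasSum_pow_div_log_of_abs_lt_one (by rwa [abs_of_pos hs0])
  have hlog' :
      HasSum (fun k : ℕ => s ^ (k + 1) / ((k : ℝ) + 2)) (s⁻¹ * (-log (1 - s) - s)) := by
    have h := ((hasSum_nat_add_iff' 1).2 hlog).mul_left s⁻¹
    norm_num at h
    refine h.congr_fun fun k => ?_
    field_simp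
    ring
  have h := (hlog.sub hlog').sub hasSum_one_div_succ_sub_one_div_succ_succ
  rw [show -log (1 - s) - s⁻¹ * (-log (1 - s) - s) - 1 = (1 - s) / s * log (1 - s) by
    field_simp; ring] at h
  exact h.congr_fun fun k => by ring

lemma one_sub_rpow_eq_exp {s : ℝ} (hs : s ≤ 1) (m : ℝ) :
    (1 - s) ^ (m * (1 - s) / s) = exp (m * ((1 - s) / s * log (1 - s))) := by
  rcases hs.lt_or_eq with hs | rfl
  · rw [rpow_def_of_pos (by linarith)]
    ring_nf
  · simp

section PoissonAtoms

variable {Ω α β : Type*} [MeasurableSpace Ω] [MeasurableSpace α] [MeasurableSpace β]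
  {P : Measure Ω}

def IsPoissonAtoms (x : ℕ → Ω → α) (ν : Measure α) (S : Set α) (P : Measure Ω) : Prop :=
  ∀ r : ℕ, ∀ A : Fin r → Set α,
    (∀ l, MeasurableSet (A l)) → (∀ l, A l ⊆ S) → (∀ l, ν (A l) ≠ ⊤) →
    Pairwise (fun l l' => Disjoint (A l) (A l')) →
    iIndepFun (fun l ω => Set.ncard {i : ℕ | x i ω ∈ A l}) P ∧
      ∀ l, ∀ j : ℕ,
        P {ω | Set.ncard {i : ℕ | x i ω ∈ A l} = j} =
          ENNReal.ofReal (Real.exp (-(ν (A l)).toReal) * (ν (A l)).toReal ^ j /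
            (Nat.factorial j))

namespace IsPoissonAtoms

variable {x : ℕ → Ω → α} {ν : Measure α} {S : Set α}

lemma measure_ncard_eq (hx : IsPoissonAtoms x ν S P) {A : Set α} (hA : MeasurableSet A)
    (hAS : A ⊆ S) (hνA : ν A ≠ ⊤) (j : ℕ) :
    P {ω | {i | x i ω ∈ A}.ncard = j} =
      ENNReal.ofReal (exp (-(ν A).toReal) * (ν A).toReal ^ j / j.factorial) :=
  (hx 1 (fun _ => A) (fun _ => hA) (fun _ => hAS) (fun _ => hνA)
    (fun l l' h => absurd (Subsingleton.elim l l') h)).2 0 j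

lemma hasLaw_ncard (hx : IsPoissonAtoms x ν S P) (hxm : ∀ i, Measurable (x i)) {A : Set α}
    (hA : MeasurableSet A) (hAS : A ⊆ S) (hνA : ν A ≠ ⊤) :
    HasLaw (fun ω => {i | x i ω ∈ A}.ncard) (poissonMeasure (ν A).toNNReal) P := by
  have hN : Measurable fun ω => {i | x i ω ∈ A}.ncard :=
    measurable_ncard_setOf_mem (E := fun i => x i ⁻¹' A) fun i => hxm i hA
  refine ⟨hN.aemeasurable, Measure.ext_of_singleton fun j => ?_⟩
  rw [Measure.map_apply hN (measurableSet_singleton j), poissonMeasure_singleton]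
  exact hx.measure_ncard_eq hA hAS hνA j

lemma map (hx : IsPoissonAtoms x ν S P) {g : α → β} (hg : Measurable g) {T : Set β}
    (hT : g ⁻¹' T ⊆ S) : IsPoissonAtoms (fun i ω => g (x i ω)) (ν.map g) T P := by
  intro r A hA hAT hνA hdisj
  simp only [Measure.map_apply hg (hA _)] at hνA ⊢
  exact hx r (fun l => g ⁻¹' A l) (fun l => hg (hA l))
    (fun l => (Set.preimage_mono (hAT l)).trans hT) hνA (fun l l' h => (hdisj h).preimage g)

lemma ae_finite (hx : IsPoissonAtoms x ν S P) {U : Set α} {T : ℕ → Set α}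
    (hT : ∀ p, MeasurableSet (T p)) (hTS : ∀ p, T p ⊆ S) (hνT : ∀ p, ν (T p) ≠ ⊤)
    (hUT : ∀ p, U ⊆ T p) (hνT_tendsto : Tendsto (fun p => (ν (T p)).toReal) atTop atTop) :
    ∀ᵐ ω ∂P, {i | x i ω ∈ U}.Finite := by
  -- `ncard` vanishes on infinite sets: infinitely many atoms in `U` force the count in every
  -- `T p` to be `0`, an event of probability `exp (-ν (T p)) → 0`.
  have hbound : ∀ p,
      P {ω | ¬ {i | x i ω ∈ U}.Finite} ≤ ENNReal.ofReal (exp (-(ν (T p)).toReal)) := by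
    intro p
    calc P {ω | ¬ {i | x i ω ∈ U}.Finite}
        ≤ P {ω | {i | x i ω ∈ T p}.ncard = 0} := measure_mono fun ω hω =>
          (Set.Infinite.mono (s := {i | x i ω ∈ U}) (fun i hi => hUT p hi) hω).ncard
      _ = ENNReal.ofReal (exp (-(ν (T p)).toReal)) := by
          simp [hx.measure_ncard_eq (hT p) (hTS p) (hνT p) 0]
  have hlim : Tendsto (fun p => ENNReal.ofReal (exp (-(ν (T p)).toReal))) atTop (𝓝 0) := by
    simpa using ENNReal.tendsto_ofReal
      (tendsto_exp_atBot.comp (tendsto_neg_atTop_atBot.comp hνT_tendsto))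
  rw [ae_iff]
  exact le_antisymm (ge_of_tendsto' hlim hbound) bot_le

section NatValued

variable {y : ℕ → Ω → ℕ} {μ : Measure ℕ}

lemma integral_pow_sum_mul_ncard (hy : IsPoissonAtoms y μ {0}ᶜ P) (hym : ∀ i, Measurable (y i))
    (hμ : ∀ k, μ {k + 1} ≠ ⊤) (s : ℝ) (J : ℕ) :
    ∫ ω, s ^ (∑ k ∈ Finset.range J, (k + 1) * {i | y i ω = k + 1}.ncard) ∂P =
      exp (∑ k ∈ Finset.range J, (μ {k + 1}).toReal * (s ^ (k + 1) - 1)) := by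
  have hindep := (hy J (fun l => {(l : ℕ) + 1}) (fun _ => measurableSet_singleton _)
    (fun _ => by simp) (fun l => hμ l)
    (fun l l' h => Set.disjoint_singleton.2 (by simpa [Fin.val_inj] using h))).1
  have hlaw : ∀ l : Fin J, HasLaw (fun ω => {i | y i ω ∈ ({(l : ℕ) + 1} : Set ℕ)}.ncard)
      (poissonMeasure (μ {(l : ℕ) + 1}).toNNReal) P := fun l =>
    hy.hasLaw_ncard hym (measurableSet_singleton _) (by simp) (hμ l)
  calc ∫ ω, s ^ (∑ k ∈ Finset.range J, (k + 1) * {i | y i ω = k + 1}.ncard) ∂P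
      = ∫ ω, ∏ l : Fin J,
          (s ^ ((l : ℕ) + 1)) ^ {i | y i ω ∈ ({(l : ℕ) + 1} : Set ℕ)}.ncard ∂P := by
        congr with ω
        rw [← Finset.prod_pow_eq_pow_sum, ← Fin.prod_univ_eq_prod_range]
        simp_rw [pow_mul]
        rfl
    _ = ∏ l : Fin J,
          ∫ ω, (s ^ ((l : ℕ) + 1)) ^ {i | y i ω ∈ ({(l : ℕ) + 1} : Set ℕ)}.ncard ∂P :=
        hindep.integral_fun_prod_comp (fun l => (hlaw l).aemeasurable) (fun _ => .of_discrete)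
    _ = ∏ l : Fin J, exp ((μ {(l : ℕ) + 1}).toReal * (s ^ ((l : ℕ) + 1) - 1)) := by
        congr with l
        rw [← ENNReal.coe_toNNReal_eq_toReal, ← integral_pow_poissonMeasure]
        exact (hlaw l).integral_comp .of_discrete
    _ = exp (∑ k ∈ Finset.range J, (μ {k + 1}).toReal * (s ^ (k + 1) - 1)) := by
        rw [Real.exp_sum,
          Fin.prod_univ_eq_prod_range (fun k => exp ((μ {k + 1}).toReal * (s ^ (k + 1) - 1)))]

lemma integral_rpow_tsum [IsProbabilityMeasure P] (hy : IsPoissonAtoms y μ {0}ᶜ P)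
    (hym : ∀ i, Measurable (y i)) (hμ : ∀ k, μ {k + 1} ≠ ⊤)
    (hfin : ∀ᵐ ω ∂P, {i | y i ω ≠ 0}.Finite) {s : ℝ} (hs : |s| ≤ 1) {L : ℝ}
    (hL : HasSum (fun k => (μ {k + 1}).toReal * (s ^ (k + 1) - 1)) L) :
    ∫ ω, s ^ (∑' i, (y i ω : ℝ≥0∞)).toReal ∂P = exp L := by
  set Y : ℕ → Ω → ℕ := fun J ω => ∑ k ∈ Finset.range J, (k + 1) * {i | y i ω = k + 1}.ncard
  have hYm : ∀ J, Measurable (Y J) := fun J => Finset.measurable_sum _ fun k _ =>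
    (measurable_ncard_setOf_mem fun i => hym i (measurableSet_singleton (k + 1))).const_mul _
  have hY_eventually : ∀ᵐ ω ∂P, ∀ᶠ J in atTop,
      s ^ (∑' i, (y i ω : ℝ≥0∞)).toReal = s ^ Y J ω := by
    filter_upwards [hfin] with ω hω
    obtain ⟨J₀, hJ₀⟩ : ∃ J₀, ∀ i, y i ω ≤ J₀ := by
      obtain ⟨J₀, hJ₀⟩ := (hω.image (y · ω)).bddAbove
      refine ⟨J₀, fun i => ?_⟩
      by_cases hi : y i ω = 0
      · omega
      · exact hJ₀ ⟨i, hi, rfl⟩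
    filter_upwards [eventually_ge_atTop J₀] with J hJ
    rw [tsum_natCast_eq_sum_range_mul_ncard hω fun i => (hJ₀ i).trans hJ, ENNReal.toReal_natCast,
      rpow_natCast]
  have hlim : Tendsto (fun J => ∫ ω, s ^ Y J ω ∂P) atTop
      (𝓝 (∫ ω, s ^ (∑' i, (y i ω : ℝ≥0∞)).toReal ∂P)) := by
    refine tendsto_integral_of_dominated_convergence (fun _ => 1)
      (fun J => (measurable_from_nat.comp (hYm J)).aestronglyMeasurable) (integrable_const 1)
      (fun J => ae_of_all _ fun ω => ?_)
      (hY_eventually.mono fun ω h => tendsto_const_nhds.congr' h)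
    rw [norm_pow, Real.norm_eq_abs]
    exact pow_le_one₀ (abs_nonneg s) hs
  refine tendsto_nhds_unique hlim ?_
  simp_rw [Y, hy.integral_pow_sum_mul_ncard hym hμ s]
  exact (continuous_exp.tendsto L).comp hL.tendsto_sum_nat

end NatValued

end IsPoissonAtoms

end PoissonAtoms

lemma intensityMeasure_Ici {c : ℝ} (hc : 0 ≤ c) {ε : ℝ} (hε : 0 < ε) :
    intensityMeasure c (Set.Ici ε) = ENNReal.ofReal (c * exp (-c) / ε) := by
  have hdensity : Set.EqOn (fun x => ENNReal.ofReal (c * exp (-c) / x ^ 2))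
      (fun x => ENNReal.ofReal (c * exp (-c) * x ^ (-2 : ℝ))) (Set.Ioi ε) := fun x hx => by
    dsimp only
    rw [rpow_neg (hε.trans hx).le, rpow_two, div_eq_mul_inv]
  have hint : IntegrableOn (fun x : ℝ => c * exp (-c) * x ^ (-2 : ℝ)) (Set.Ioi ε) :=
    (integrableOn_Ioi_rpow_of_lt (by norm_num) hε).const_mul _
  rw [intensityMeasure, withDensity_apply _ measurableSet_Ici,
    Measure.restrict_restrict measurableSet_Ici, Set.inter_eq_left.2 (Set.Ici_subset_Ioi.2 hε),
    ← Measure.restrict_congr_set Ioi_ae_eq_Ici, setLIntegral_congr_fun measurableSet_Ioi hdensity,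
    ← ofReal_integral_eq_lintegral_ofReal hint
      ((ae_restrict_mem measurableSet_Ioi).mono fun x (hx : ε < x) => by
        have := hε.trans hx
        positivity),
    integral_const_mul, integral_Ioi_rpow_of_lt (by norm_num) hε]
  norm_num [rpow_neg_one, div_eq_mul_inv]

lemma intensityMeasure_Ico {c : ℝ} (hc : 0 ≤ c) {u v : ℝ} (hu : 0 < u) (huv : u ≤ v) :
    intensityMeasure c (Set.Ico u v) =
      ENNReal.ofReal (c * exp (-c) / u - c * exp (-c) / v) := by
  have hv : 0 < v := hu.trans_le huv
  rw [← Set.Ici_sdiff_Ici,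
    measure_sdiff (Set.Ici_subset_Ici.2 huv) measurableSet_Ici.nullMeasurableSet
      (by simp [intensityMeasure_Ici hc hv]),
    intensityMeasure_Ici hc hu, intensityMeasure_Ici hc hv, ← ENNReal.ofReal_sub _ (by positivity)]

lemma one_div_sub_one_div_add_one_nonneg {q : ℝ} (hq : 0 < q) : 0 ≤ 1 / q - 1 / (q + 1) :=
  sub_nonneg.2 (one_div_le_one_div_of_le hq (by linarith))

lemma preimage_floor_mul_compl_zero {a : ℝ} (ha : 0 < a) :
    (fun y => ⌊a * y⌋₊) ⁻¹' {0}ᶜ = Set.Ici (1 / a) := by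
  ext y
  simp [Nat.floor_eq_zero, one_div, inv_le_iff_one_le_mul₀' ha]

lemma preimage_floor_mul_singleton {a : ℝ} (ha : 0 < a) {k : ℕ} (hk : k ≠ 0) :
    (fun y => ⌊a * y⌋₊) ⁻¹' {k} = Set.Ico (k / a) ((k + 1) / a) := by
  ext y
  simp [Nat.floor_eq_iff' hk, div_le_iff₀ ha, lt_div_iff₀ ha, mul_comm]

lemma intensityMeasure_map_floor_mul_singleton {c a : ℝ} (hc : 0 ≤ c) (ha : 0 < a) {k : ℕ}
    (hk : k ≠ 0) :
    (intensityMeasure c).map (fun y => ⌊a * y⌋₊) {k} =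
      ENNReal.ofReal (c * exp (-c) * a * (1 / k - 1 / (k + 1))) := by
  have hk' : (0 : ℝ) < k := by positivity
  rw [Measure.map_apply (measurable_const_mul a).nat_floor (measurableSet_singleton k),
    preimage_floor_mul_singleton ha hk,
    intensityMeasure_Ico hc (by positivity) (by gcongr; linarith)]
  congr 1
  field_simp

lemma toReal_intensityMeasure_map_floor_mul_singleton {c a : ℝ} (hc : 0 ≤ c) (ha : 0 < a)
    {k : ℕ} (hk : k ≠ 0) :
    ((intensityMeasure c).map (fun y => ⌊a * y⌋₊) {k}).toReal =
      c * exp (-c) * a * (1 / k - 1 / (k + 1)) := by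
  rw [intensityMeasure_map_floor_mul_singleton hc ha hk,
    ENNReal.toReal_ofReal
      (mul_nonneg (by positivity) (one_div_sub_one_div_add_one_nonneg (by positivity)))]

lemma intensityMeasure_map_floor_mul_apply {c a : ℝ} (hc : 0 ≤ c) (ha : 0 < a) {B : Set ℕ}
    (hB : 0 ∉ B) :
    (intensityMeasure c).map (fun y => ⌊a * y⌋₊) B =
      ENNReal.ofReal (∑' q : B, c * exp (-c) * a * (1 / (q : ℝ) - 1 / ((q : ℝ) + 1))) := by
  have hq : ∀ q : B, (q : ℕ) ≠ 0 := fun q h => hB (h ▸ q.2)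
  have hsummable :
      Summable fun q : ℕ => c * exp (-c) * a * (1 / (q : ℝ) - 1 / ((q : ℝ) + 1)) := by
    refine (summable_nat_add_iff 1).1 ?_
    refine (hasSum_one_div_succ_sub_one_div_succ_succ.summable.mul_left (c * exp (-c) * a)).congr
      fun k => ?_
    push_cast
    ring
  have hnonneg : ∀ q : B, 0 ≤ c * exp (-c) * a * (1 / (q : ℝ) - 1 / ((q : ℝ) + 1)) :=
      fun q => by
    have := hq q
    exact mul_nonneg (by positivity) (one_div_sub_one_div_add_one_nonneg (by positivity))
  rw [← Measure.tsum_indicator_apply_singleton _ B .of_discrete, ← tsum_subtype,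
    ENNReal.ofReal_tsum_of_nonneg hnonneg (hsummable.subtype B)]
  exact tsum_congr fun q => intensityMeasure_map_floor_mul_singleton hc ha (hq q)

lemma toReal_intensityMeasure_map_floor_mul_apply {c a : ℝ} (hc : 0 ≤ c) (ha : 0 < a)
    {B : Set ℕ} (hB : 0 ∉ B) :
    ((intensityMeasure c).map (fun y => ⌊a * y⌋₊) B).toReal =
      ∑' q : B, c * exp (-c) * a * (1 / (q : ℝ) - 1 / ((q : ℝ) + 1)) := by
  rw [intensityMeasure_map_floor_mul_apply hc ha hB,
    ENNReal.toReal_ofReal (tsum_nonneg fun q => ?_)]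
  have : (q : ℕ) ≠ 0 := fun h => hB (h ▸ q.2)
  exact mul_nonneg (by positivity) (one_div_sub_one_div_add_one_nonneg (by positivity))

lemma IsPoissonAtoms.ae_finite_setOf_mem_Ici {Ω : Type*} [MeasurableSpace Ω] {P : Measure Ω}
    {x : ℕ → Ω → ℝ} {c : ℝ} (hx : IsPoissonAtoms x (intensityMeasure c) (Set.Ioi 0) P)
    (hc : 0 < c) {ε : ℝ} (hε : 0 < ε) : ∀ᵐ ω ∂P, {i | x i ω ∈ Set.Ici ε}.Finite := by
  have hν : ∀ p : ℕ, intensityMeasure c (Set.Ici (ε / (p + 1))) =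
      ENNReal.ofReal (c * exp (-c) / ε * (p + 1)) := fun p => by
    rw [intensityMeasure_Ici hc.le (by positivity)]
    congr 1
    field_simp
  refine hx.ae_finite (T := fun p : ℕ => Set.Ici (ε / (p + 1))) (fun _ => measurableSet_Ici)
    (fun p => Set.Ici_subset_Ioi.2 (by positivity)) (fun p => by simp [hν])
    (fun p => Set.Ici_subset_Ici.2 (div_le_self hε.le (by simp))) ?_
  have hK : 0 < c * exp (-c) / ε := by positivity
  simp_rw [hν, ENNReal.toReal_ofReal (mul_nonneg hK.le (Nat.cast_add_one_pos _).le)]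
  exact (tendsto_natCast_atTop_atTop.atTop_add tendsto_const_nhds).const_mul_atTop hK

theorem floors_of_poisson_atoms_general
    (c : ℝ) (hc : 0 < c)
    -- a probability space carrying the atoms `x i`
    (Ω : Type) (mΩ : MeasurableSpace Ω)
    (P : Measure Ω) (hP : IsProbabilityMeasure P)
    (x : ℕ → Ω → ℝ) (hxmeas : ∀ i, Measurable (x i))
    -- `(x i)` is the family of atoms of a Poisson random measure with intensity
    -- `c e^{-c} x⁻² dx`: for disjoint Borel subsets of `(0,∞)` of finite intensity, the
    -- numbers of atoms are independent Poisson variables with the prescribed means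
    (hPRM : ∀ r : ℕ, ∀ A : Fin r → Set ℝ,
      (∀ l, MeasurableSet (A l)) → (∀ l, A l ⊆ Set.Ioi 0) →
      (∀ l, intensityMeasure c (A l) ≠ ⊤) →
      Pairwise (fun l l' => Disjoint (A l) (A l')) →
      iIndepFun
          (fun l ω => Set.ncard {i : ℕ | x i ω ∈ A l}) P ∧
        ∀ l, ∀ j : ℕ,
          P {ω | Set.ncard {i : ℕ | x i ω ∈ A l} = j} =
            ENNReal.ofReal (Real.exp (-(intensityMeasure c (A l)).toReal) *
              (intensityMeasure c (A l)).toReal ^ j / (Nat.factorial j))) :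
    -- conclusions, for every `n ≥ 2`:
    ∀ n : ℕ, 2 ≤ n →
      -- (1) `X_n = Σ_i ⌊(n/log n) x_i⌋` is almost surely finite
      ((∀ᵐ ω ∂P,
        (∑' i : ℕ, (⌊(n / Real.log n) * x i ω⌋₊ : ℝ≥0∞)) ≠ ⊤) ∧
      -- (2) the nonzero values `⌊(n/log n) x_i⌋` form a Poisson random measure on `ℕ`
      -- with intensity `m μ`, `m = c e^{-c} n / log n`, `μ(j) = 1/j - 1/(j+1)`
      (∀ r : ℕ, ∀ B : Fin r → Set ℕ, (∀ l, (0 : ℕ) ∉ B l) →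
        Pairwise (fun l l' => Disjoint (B l) (B l')) →
        iIndepFun
            (fun l ω => Set.ncard {i : ℕ | ⌊(n / Real.log n) * x i ω⌋₊ ∈ B l}) P ∧
          ∀ l, ∀ j : ℕ,
            P {ω | Set.ncard {i : ℕ | ⌊(n / Real.log n) * x i ω⌋₊ ∈ B l} = j} =
              ENNReal.ofReal
                (Real.exp (-(∑' q : B l, (c * Real.exp (-c) * n / Real.log n) *
                    (1 / ((q : ℕ) : ℝ) - 1 / (((q : ℕ) : ℝ) + 1)))) *
                  (∑' q : B l, (c * Real.exp (-c) * n / Real.log n) *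
                    (1 / ((q : ℕ) : ℝ) - 1 / (((q : ℕ) : ℝ) + 1))) ^ j /
                  (Nat.factorial j))) ∧
      -- (3) `X_n` has the Luria–Delbrück law with parameter `m = c e^{-c} n / log n`
      (∀ s : ℝ, 0 < s → s ≤ 1 →
        ∫ ω, s ^ ((∑' i : ℕ, (⌊(n / Real.log n) * x i ω⌋₊ : ℝ≥0∞)).toReal) ∂P =
          (1 - s) ^ ((c * Real.exp (-c) * n / Real.log n) * (1 - s) / s))) := by
  intro n hn
  have ha : 0 < (n : ℝ) / log n :=
    div_pos (by positivity) (log_pos (by exact_mod_cast hn))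
  set a := (n : ℝ) / log n
  rw [show c * exp (-c) * n / log n = c * exp (-c) * a from mul_div_assoc _ _ _]
  have hx : IsPoissonAtoms x (intensityMeasure c) (Set.Ioi 0) P := hPRM
  have hy : IsPoissonAtoms (fun i ω => ⌊a * x i ω⌋₊)
      ((intensityMeasure c).map fun y => ⌊a * y⌋₊) {0}ᶜ P :=
    hx.map (measurable_const_mul a).nat_floor
      (preimage_floor_mul_compl_zero ha ▸ Set.Ici_subset_Ioi.2 (one_div_pos.2 ha))
  have hfin : ∀ᵐ ω ∂P, {i | ⌊a * x i ω⌋₊ ≠ 0}.Finite := by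
    have h := hx.ae_finite_setOf_mem_Ici hc (one_div_pos.2 ha)
    rwa [← preimage_floor_mul_compl_zero ha] at h
  refine ⟨?_, fun r B hB0 hBdisj => ?_, fun s hs0 hs1 => ?_⟩
  · filter_upwards [hfin] with ω hω
    rw [tsum_eq_sum (s := hω.toFinset) (by simp)]
    exact ENNReal.sum_ne_top.2 fun i _ => ENNReal.natCast_ne_top _
  · have h := hy r B (fun _ => .of_discrete) (fun l => Set.subset_compl_singleton_iff.2 (hB0 l))
      (fun l => by simp [intensityMeasure_map_floor_mul_apply hc.le ha (hB0 l)]) hBdisj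
    refine ⟨h.1, fun l j => ?_⟩
    rw [h.2 l j, toReal_intensityMeasure_map_floor_mul_apply hc.le ha (hB0 l)]
  · have := hP
    rw [one_sub_rpow_eq_exp hs1]
    refine hy.integral_rpow_tsum (fun i => ((hxmeas i).const_mul a).nat_floor)
      (fun k => by simp [intensityMeasure_map_floor_mul_singleton hc.le ha k.succ_ne_zero]) hfin
      (abs_le.2 ⟨by linarith, hs1⟩) ?_
    refine ((hasSum_one_div_sub_one_div_succ_mul_pow_sub_one hs0 hs1).mul_left
      (c * exp (-c) * a)).congr_fun fun k => ?_
    rw [toReal_intensityMeasure_map_floor_mul_singleton hc.le ha k.succ_ne_zero]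
    push_cast
    ring

theorem floors_of_poisson_atoms
    (c : ℝ) (hc : 0 < c)
    -- a probability space carrying the atoms `x i`
    (Ω : Type) (mΩ : MeasurableSpace Ω)
    (P : Measure Ω) (hP : IsProbabilityMeasure P)
    (x : ℕ → Ω → ℝ) (hxmeas : ∀ i, Measurable (x i))
    -- the atoms are positive and listed in strictly decreasing order
    (horder : ∀ᵐ ω ∂P, (∀ i, 0 < x i ω) ∧ StrictAnti (fun i => x i ω))
    -- `(x i)` is the family of atoms of a Poisson random measure with intensity
    -- `c e^{-c} x⁻² dx`: for disjoint Borel subsets of `(0,∞)` of finite intensity, the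
    -- numbers of atoms are independent Poisson variables with the prescribed means
    (hPRM : ∀ r : ℕ, ∀ A : Fin r → Set ℝ,
      (∀ l, MeasurableSet (A l)) → (∀ l, A l ⊆ Set.Ioi 0) →
      (∀ l, intensityMeasure c (A l) ≠ ⊤) →
      Pairwise (fun l l' => Disjoint (A l) (A l')) →
      iIndepFun
          (fun l ω => Set.ncard {i : ℕ | x i ω ∈ A l}) P ∧
        ∀ l, ∀ j : ℕ,
          P {ω | Set.ncard {i : ℕ | x i ω ∈ A l} = j} =
            ENNReal.ofReal (Real.exp (-(intensityMeasure c (A l)).toReal) *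
              (intensityMeasure c (A l)).toReal ^ j / (Nat.factorial j))) :
    -- conclusions, for every `n ≥ 2`:
    ∀ n : ℕ, 2 ≤ n →
      -- (1) `X_n = Σ_i ⌊(n/log n) x_i⌋` is almost surely finite
      ((∀ᵐ ω ∂P,
        (∑' i : ℕ, (⌊(n / Real.log n) * x i ω⌋₊ : ℝ≥0∞)) ≠ ⊤) ∧
      -- (2) the nonzero values `⌊(n/log n) x_i⌋` form a Poisson random measure on `ℕ`
      -- with intensity `m μ`, `m = c e^{-c} n / log n`, `μ(j) = 1/j - 1/(j+1)`
      (∀ r : ℕ, ∀ B : Fin r → Set ℕ, (∀ l, (0 : ℕ) ∉ B l) →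
        Pairwise (fun l l' => Disjoint (B l) (B l')) →
        iIndepFun
            (fun l ω => Set.ncard {i : ℕ | ⌊(n / Real.log n) * x i ω⌋₊ ∈ B l}) P ∧
          ∀ l, ∀ j : ℕ,
            P {ω | Set.ncard {i : ℕ | ⌊(n / Real.log n) * x i ω⌋₊ ∈ B l} = j} =
              ENNReal.ofReal
                (Real.exp (-(∑' q : B l, (c * Real.exp (-c) * n / Real.log n) *
                    (1 / ((q : ℕ) : ℝ) - 1 / (((q : ℕ) : ℝ) + 1)))) *
                  (∑' q : B l, (c * Real.exp (-c) * n / Real.log n) *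
                    (1 / ((q : ℕ) : ℝ) - 1 / (((q : ℕ) : ℝ) + 1))) ^ j /
                  (Nat.factorial j))) ∧
      -- (3) `X_n` has the Luria–Delbrück law with parameter `m = c e^{-c} n / log n`
      (∀ s : ℝ, 0 < s → s ≤ 1 →
        ∫ ω, s ^ ((∑' i : ℕ, (⌊(n / Real.log n) * x i ω⌋₊ : ℝ≥0∞)).toReal) ∂P =
          (1 - s) ^ ((c * Real.exp (-c) * n / Real.log n) * (1 - s) / s))) :=
  floors_of_poisson_atoms_general c hc Ω mΩ P hP x hxmeas hPRM

end
end

section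
/- Fix d ≥ 2 and c > 0. Perform Bernoulli bond percolation with parameter e^{-c/h} on the rooted infinite d-regular tree and let ∇_h be the number of vertices at height h disconnected from the root. Then d^{-h} ∇_h → 1 - e^{-c} in probability as h → ∞. -/
/-!
Second-moment method. Let `N` count the vertices at height `h` that stay connected to the root,
so that `∇_h = d^h - N`, and put `q = e^{-c/h}`. A vertex is connected with probability
`q^h = e^{-c}`, and two vertices whose root paths share `m` edges are both connected with
probability `q^{2h-m}`, so their covariance is at most `1 - q^m ≤ m c / h`. For a fixed vertex,
`d^{h-1-ℓ}` vertices share its `ℓ + 1` topmost edges, so it shares fewer than `d^h` edges in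
total with all vertices together; hence `Var N ≤ (c/h) d^{2h}` and Chebyshev's inequality gives
`P(|N / d^h - e^{-c}| ≥ ε) ≤ c / (h ε²)`.
-/

open MeasureTheory ProbabilityTheory Filter Real Topology
open scoped ENNReal NNReal

noncomputable section

/-- `eta d k del f` = the number of deleted edges on the branch from the vertex `f`
(at height `k`) to the root of the `d`-regular tree, where `del ℓ g = true` means that
the edge joining the vertex `g` (at height `ℓ`) to its parent is deleted.  The vertex
`f` is disconnected from the root iff `1 ≤ eta d k del f`. -/
def eta (d k : ℕ) (del : (ℓ : ℕ) → (Fin ℓ → Fin d) → Bool) (f : Fin k → Fin d) : ℕ :=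
  Set.ncard {ℓ : Fin k | del (ℓ.1 + 1) (fun i => f (Fin.castLE ℓ.isLt i)) = true}

open Finset

lemma ProbabilityTheory.iIndepFun.measureReal_forall_mem_eq_false {Ω ι : Type*}
    [MeasurableSpace Ω] {P : Measure Ω} {X : ι → Ω → Bool} (hX : iIndepFun X P)
    (S : Finset ι) {q : ℝ} (hq : ∀ i ∈ S, P.real {ω | X i ω = false} = q) :
    P.real {ω | ∀ i ∈ S, X i ω = false} = q ^ #S := by
  have hmeas : ∀ i ∈ S, MeasurableSet[MeasurableSpace.comap (X i) inferInstance]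
      {ω | X i ω = false} := fun i _ => ⟨{false}, trivial, rfl⟩
  rw [← prod_const, ← prod_congr rfl hq]
  simp only [measureReal_def, ← ENNReal.toReal_prod, ← hX.meas_biInter hmeas]
  congr 2
  ext ω
  simp

lemma ProbabilityTheory.covariance_indicator_one {Ω : Type*} [MeasurableSpace Ω]
    {P : Measure Ω} [IsProbabilityMeasure P] {A B : Set Ω}
    (hA : MeasurableSet A) (hB : MeasurableSet B) :
    cov[A.indicator 1, B.indicator 1; P] = P.real (A ∩ B) - P.real A * P.real B := by
  have hA2 : MemLp (A.indicator (1 : Ω → ℝ)) 2 P :=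
    memLp_indicator_const 2 hA 1 (Or.inr (by finiteness))
  have hB2 : MemLp (B.indicator (1 : Ω → ℝ)) 2 P :=
    memLp_indicator_const 2 hB 1 (Or.inr (by finiteness))
  rw [covariance_eq_sub hA2 hB2, ← Set.inter_indicator_one,
    integral_indicator_one (hA.inter hB), integral_indicator_one hA, integral_indicator_one hB]

lemma exp_neg_pow_sub_le {a : ℝ} (ha : 0 ≤ a) {h m : ℕ} (hm : m ≤ h) :
    exp (-a) ^ (2 * h - m) - exp (-a) ^ h * exp (-a) ^ h ≤ a * m := by
  have hq0 : 0 ≤ exp (-a) := (exp_pos _).le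
  have hq1 : exp (-a) ≤ 1 := exp_le_one_iff.mpr (neg_nonpos.mpr ha)
  have hsplit : exp (-a) ^ h * exp (-a) ^ h =
      exp (-a) ^ (2 * h - m) * exp (-a) ^ m := by
    rw [← pow_add, ← pow_add]; congr 1; omega
  have hexp : 1 - exp (-a) ^ m ≤ a * m := by
    rw [← exp_nat_mul]
    linarith [add_one_le_exp (m * -a)]
  calc exp (-a) ^ (2 * h - m) - exp (-a) ^ h * exp (-a) ^ h
      = exp (-a) ^ (2 * h - m) * (1 - exp (-a) ^ m) := by rw [hsplit]; ring
    _ ≤ 1 - exp (-a) ^ m :=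
        mul_le_of_le_one_left (sub_nonneg.mpr (pow_le_one₀ hq0 hq1)) (pow_le_one₀ hq0 hq1)
    _ ≤ a * m := hexp

namespace RegularTree

variable {Ω : Type*} {d h : ℕ} {Del : (ℓ : ℕ) → (Fin ℓ → Fin d) → Ω → Bool}

/-- The edge joining the ancestors of the vertex `f` at heights `ℓ` and `ℓ + 1`, indexed by its
lower endpoint. -/
def pathEdge (f : Fin h → Fin d) (ℓ : Fin h) : (k : ℕ) × (Fin k → Fin d) :=
  ⟨ℓ + 1, fun i => f (Fin.castLE ℓ.isLt i)⟩

def pathEdges (f : Fin h → Fin d) : Finset ((k : ℕ) × (Fin k → Fin d)) :=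
  univ.image (pathEdge f)

def commonEdges (f g : Fin h → Fin d) : ℕ :=
  #(pathEdges f ∩ pathEdges g)

lemma pathEdge_injective (f : Fin h → Fin d) : Function.Injective (pathEdge f) :=
  fun _ _ hℓ => Fin.ext (Nat.succ_injective (congrArg Sigma.fst hℓ))

lemma pathEdge_eq_pathEdge_iff {f g : Fin h → Fin d} {ℓ : Fin h} :
    pathEdge g ℓ = pathEdge f ℓ ↔ ∀ i, i ≤ ℓ → g i = f i := by
  simp only [pathEdge, Sigma.mk.injEq, heq_eq_eq, true_and, funext_iff]
  refine ⟨fun hgf i hi => hgf ⟨i, Nat.lt_succ_of_le hi⟩, fun hgf i => hgf _ ?_⟩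
  exact Nat.le_of_lt_succ i.isLt

lemma pathEdge_mem_pathEdges_iff {f g : Fin h → Fin d} {ℓ : Fin h} :
    pathEdge f ℓ ∈ pathEdges g ↔ pathEdge g ℓ = pathEdge f ℓ := by
  refine ⟨fun hmem => ?_, fun hgf => hgf ▸ mem_image_of_mem _ (mem_univ ℓ)⟩
  obtain ⟨ℓ', -, hℓ'⟩ := mem_image.mp hmem
  obtain rfl : ℓ' = ℓ := Fin.ext (Nat.succ_injective (congrArg Sigma.fst hℓ'))
  exact hℓ'

lemma one_le_of_mem_pathEdges {f : Fin h → Fin d} {e : (k : ℕ) × (Fin k → Fin d)}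
    (he : e ∈ pathEdges f) : 1 ≤ e.1 := by
  obtain ⟨ℓ, -, rfl⟩ := mem_image.mp he
  exact Nat.le_add_left 1 ℓ

lemma card_pathEdges (f : Fin h → Fin d) : #(pathEdges f) = h := by
  rw [pathEdges, card_image_of_injective _ (pathEdge_injective f), card_univ, Fintype.card_fin]

lemma commonEdges_le (f g : Fin h → Fin d) : commonEdges f g ≤ h :=
  (card_le_card inter_subset_left).trans (card_pathEdges f).le

lemma card_pathEdges_union (f g : Fin h → Fin d) :
    #(pathEdges f ∪ pathEdges g) = 2 * h - commonEdges f g := by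
  have := card_union_add_card_inter (pathEdges f) (pathEdges g)
  rw [card_pathEdges, card_pathEdges] at this
  rw [commonEdges]
  omega

lemma commonEdges_eq_card_filter (f g : Fin h → Fin d) :
    commonEdges f g = #{ℓ | pathEdge g ℓ = pathEdge f ℓ} := by
  rw [commonEdges, pathEdges, ← filter_mem_eq_inter, filter_image,
    card_image_of_injective _ (pathEdge_injective f)]
  simp only [pathEdge_mem_pathEdges_iff]

lemma card_filter_pathEdge_eq (f : Fin h → Fin d) (ℓ : Fin h) :
    #{g | pathEdge g ℓ = pathEdge f ℓ} = d ^ (h - 1 - ℓ) := by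
  classical
  have hset : ({g | pathEdge g ℓ = pathEdge f ℓ} : Finset (Fin h → Fin d)) =
      Fintype.piFinset fun i => if i ≤ ℓ then {f i} else univ := by
    ext g
    simp only [mem_filter, mem_univ, true_and, Fintype.mem_piFinset, pathEdge_eq_pathEdge_iff]
    refine forall_congr' fun i => ?_
    split_ifs <;> simp [*]
  rw [hset, Fintype.card_piFinset, ← Fin.card_Ioi, ← filter_lt_eq_Ioi]
  simp [apply_ite card, prod_ite, not_le]

lemma sum_commonEdges_lt (hd : 2 ≤ d) (f : Fin h → Fin d) :
    ∑ g, commonEdges f g < d ^ h := by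
  calc ∑ g, commonEdges f g = ∑ ℓ : Fin h, #{g | pathEdge g ℓ = pathEdge f ℓ} := by
        simp only [commonEdges_eq_card_filter, card_filter]
        exact sum_comm
    _ = ∑ j ∈ range h, d ^ j := by
        simp only [card_filter_pathEdge_eq]
        rw [Fin.sum_univ_eq_sum_range (fun j => d ^ (h - 1 - j)), sum_range_reflect]
    _ < d ^ h := Nat.geomSum_lt hd fun _ => mem_range.mp

variable (Del) in
def connected (f : Fin h → Fin d) : Set Ω :=
  {ω | ∀ e ∈ pathEdges f, Del e.1 e.2 ω = false}

variable (Del) in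
def connectedCount (h : ℕ) (ω : Ω) : ℝ :=
  ∑ f : Fin h → Fin d, (connected Del f).indicator 1 ω

lemma one_le_eta_iff {ω : Ω} {f : Fin h → Fin d} :
    1 ≤ eta d h (fun ℓ g => Del ℓ g ω) f ↔ ω ∉ connected Del f := by
  change 0 < Set.ncard _ ↔ _
  rw [Set.ncard_pos (Set.toFinite _)]
  simp [connected, pathEdges, pathEdge, Set.Nonempty]

lemma ncard_one_le_eta (ω : Ω) :
    (Set.ncard {f : Fin h → Fin d | 1 ≤ eta d h (fun ℓ g => Del ℓ g ω) f} : ℝ) =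
      d ^ h - connectedCount Del h ω := by
  classical
  simp only [one_le_eta_iff]
  rw [Set.ncard_eq_toFinset_card', Set.toFinset_ofPred, card_filter]
  have hcard : (d : ℝ) ^ h = ∑ _f : Fin h → Fin d, 1 := by simp
  rw [connectedCount, hcard, ← sum_sub_distrib]
  push_cast
  refine sum_congr rfl fun f _ => ?_
  by_cases hf : ω ∈ connected Del f <;> simp [hf]

variable [MeasurableSpace Ω] {P : Measure Ω} [IsProbabilityMeasure P] {a : ℝ}

lemma measurableSet_connected (hDel : ∀ ℓ g, Measurable (Del ℓ g)) (f : Fin h → Fin d) :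
    MeasurableSet (connected Del f) := by
  simp only [connected, Set.ofPred_forall]
  exact .biInter (pathEdges f).countable_toSet fun e _ =>
    hDel e.1 e.2 (measurableSet_singleton false)

section Law

variable (hDel : ∀ ℓ g, Measurable (Del ℓ g))
  (hindep : iIndepFun (fun e : (ℓ : ℕ) × (Fin ℓ → Fin d) => Del e.1 e.2) P) (ha : 0 ≤ a)
  (hlaw : ∀ ℓ, 1 ≤ ℓ → ∀ g : Fin ℓ → Fin d,
    P {ω | Del ℓ g ω = true} = ENNReal.ofReal (1 - exp (-a)))
include hDel ha hlaw

lemma measureReal_del_eq_false {ℓ : ℕ} (hℓ : 1 ≤ ℓ) (g : Fin ℓ → Fin d) :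
    P.real {ω | Del ℓ g ω = false} = exp (-a) := by
  have hcompl : {ω | Del ℓ g ω = false} = {ω | Del ℓ g ω = true}ᶜ := by
    ext; simp
  have hmeas : MeasurableSet {ω | Del ℓ g ω = true} := hDel ℓ g (measurableSet_singleton true)
  rw [hcompl, probReal_compl_eq_one_sub hmeas,
    measureReal_def, hlaw ℓ hℓ g,
    ENNReal.toReal_ofReal (sub_nonneg.mpr (exp_le_one_iff.mpr (neg_nonpos.mpr ha)))]
  ring

include hindep

lemma measureReal_connected (f : Fin h → Fin d) : P.real (connected Del f) = exp (-a) ^ h := by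
  rw [connected, hindep.measureReal_forall_mem_eq_false _ fun e he =>
    measureReal_del_eq_false hDel ha hlaw (one_le_of_mem_pathEdges he) _, card_pathEdges]

lemma measureReal_connected_inter (f g : Fin h → Fin d) :
    P.real (connected Del f ∩ connected Del g) = exp (-a) ^ (2 * h - commonEdges f g) := by
  have hunion : connected Del f ∩ connected Del g =
      {ω | ∀ e ∈ pathEdges f ∪ pathEdges g, Del e.1 e.2 ω = false} := by
    ext ω
    simp [connected, or_imp, forall_and]
  rw [hunion, hindep.measureReal_forall_mem_eq_false _ fun e he => ?_, card_pathEdges_union]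
  rcases mem_union.mp he with he | he <;>
    exact measureReal_del_eq_false hDel ha hlaw (one_le_of_mem_pathEdges he) _

lemma integral_connectedCount : P[connectedCount Del h] = d ^ h * exp (-a) ^ h := by
  unfold connectedCount
  rw [integral_finsetSum _ fun f _ =>
    (integrable_const 1).indicator (measurableSet_connected hDel f)]
  simp [integral_indicator_one (measurableSet_connected hDel _),
    measureReal_connected hDel hindep ha hlaw]

lemma variance_connectedCount_le (hd : 2 ≤ d) :
    Var[connectedCount Del h; P] ≤ a * (d ^ h * d ^ h) := by
  have hmemLp (f : Fin h → Fin d) : MemLp ((connected Del f).indicator (1 : Ω → ℝ)) 2 P :=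
    memLp_indicator_const 2 (measurableSet_connected hDel f) 1 (Or.inr (by finiteness))
  have hsum (f : Fin h → Fin d) : (∑ g, commonEdges f g : ℝ) ≤ d ^ h := by
    exact_mod_cast (sum_commonEdges_lt hd f).le
  calc Var[connectedCount Del h; P]
      = ∑ f, ∑ g, cov[(connected Del f).indicator 1, (connected Del g).indicator 1; P] :=
        variance_fun_sum hmemLp
    _ = ∑ f, ∑ g, (exp (-a) ^ (2 * h - commonEdges f g) - exp (-a) ^ h * exp (-a) ^ h) := by
        simp only [covariance_indicator_one (measurableSet_connected hDel _)
          (measurableSet_connected hDel _), measureReal_connected_inter hDel hindep ha hlaw,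
          measureReal_connected hDel hindep ha hlaw]
        rfl
    _ ≤ ∑ f, ∑ g, a * commonEdges f g :=
        sum_le_sum fun f _ => sum_le_sum fun g _ => exp_neg_pow_sub_le ha (commonEdges_le f g)
    _ ≤ ∑ _f : Fin h → Fin d, a * d ^ h := by
        simp only [← mul_sum]
        exact mul_le_mul_of_nonneg_left (sum_le_sum fun f _ => hsum f) ha
    _ = a * (d ^ h * d ^ h) := by simp; ring

lemma measure_connectedCount_div_deviation_le (hd : 2 ≤ d) {ε : ℝ} (hε : 0 < ε) :
    P {ω | ε ≤ |connectedCount Del h ω / d ^ h - exp (-a) ^ h|} ≤ ENNReal.ofReal (a / ε ^ 2) := by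
  have hD : (0 : ℝ) < d ^ h := pow_pos (by exact_mod_cast (by omega : 0 < d)) h
  have hmemLp : MemLp (connectedCount Del h) 2 P := memLp_finsetSum univ fun f _ =>
    memLp_indicator_const 2 (measurableSet_connected hDel f) 1 (Or.inr (by finiteness))
  have hevent : {ω | ε ≤ |connectedCount Del h ω / d ^ h - exp (-a) ^ h|} =
      {ω | ε * d ^ h ≤ |connectedCount Del h ω - P[connectedCount Del h]|} := by
    ext ω
    have hdiv : connectedCount Del h ω / d ^ h - exp (-a) ^ h =
        (connectedCount Del h ω - d ^ h * exp (-a) ^ h) / d ^ h := by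
      field_simp
    rw [Set.mem_ofPred_eq, Set.mem_ofPred_eq, integral_connectedCount hDel hindep ha hlaw, hdiv,
      abs_div, abs_of_pos hD, le_div_iff₀ hD]
  calc P {ω | ε ≤ |connectedCount Del h ω / d ^ h - exp (-a) ^ h|}
      ≤ ENNReal.ofReal (Var[connectedCount Del h; P] / (ε * d ^ h) ^ 2) :=
        hevent ▸ meas_ge_le_variance_div_sq hmemLp (by positivity)
    _ ≤ ENNReal.ofReal (a * (d ^ h * d ^ h) / (ε * d ^ h) ^ 2) := by
        gcongr
        exact variance_connectedCount_le hDel hindep ha hlaw hd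
    _ = ENNReal.ofReal (a / ε ^ 2) := by
        congr 1
        field_simp

end Law

end RegularTree

theorem regular_tree_law_of_large_numbers
    (d : ℕ) (hd : 2 ≤ d) (c : ℝ) (hc : 0 < c)
    -- for each `h`, a probability space carrying the percolation on the `d`-regular tree
    (Ω : ℕ → Type) (mΩ : ∀ h, MeasurableSpace (Ω h))
    (P : ∀ h, Measure (Ω h)) (hP : ∀ h, IsProbabilityMeasure (P h))
    -- `Del h ℓ g = true` iff the edge joining the vertex `g` at height `ℓ` to its parent
    -- is deleted
    (Del : ∀ h : ℕ, (ℓ : ℕ) → (Fin ℓ → Fin d) → Ω h → Bool)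
    (hDelmeas : ∀ h ℓ g, Measurable (Del h ℓ g))
    -- the edges are deleted independently ...
    (hindep : ∀ h, iIndepFun
      (fun p : (ℓ : ℕ) × (Fin ℓ → Fin d) => Del h p.1 p.2) (P h))
    -- ... each with probability `1 - e^{-c/h}`
    (hlaw : ∀ h : ℕ, 1 ≤ h → ∀ ℓ : ℕ, 1 ≤ ℓ → ∀ g : Fin ℓ → Fin d,
      P h {ω | Del h ℓ g ω = true} = ENNReal.ofReal (1 - Real.exp (-(c / h)))) :
    -- conclusion: `d^{-h} ∇_h → 1 - e^{-c}` in probability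
    ∀ ε : ℝ, 0 < ε →
      Tendsto (fun h : ℕ =>
        P h {ω | ε ≤ |((Set.ncard {f : Fin h → Fin d |
            1 ≤ eta d h (fun ℓ g => Del h ℓ g ω) f} : ℕ) : ℝ) / (d : ℝ) ^ h -
          (1 - Real.exp (-c))|})
        atTop (𝓝 0) := by
  intro ε hε
  have hbound (h : ℕ) (hh : 1 ≤ h) :
      P h {ω | ε ≤ |((Set.ncard {f : Fin h → Fin d |
          1 ≤ eta d h (fun ℓ g => Del h ℓ g ω) f} : ℕ) : ℝ) / (d : ℝ) ^ h -
        (1 - Real.exp (-c))|} ≤ ENNReal.ofReal (c / h / ε ^ 2) := by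
    have hD : (d : ℝ) ^ h ≠ 0 := pow_ne_zero h (by exact_mod_cast (by omega : d ≠ 0))
    have hexp : exp (-(c / h)) ^ h = exp (-c) := by
      rw [← exp_nat_mul]
      field_simp
    have hdev (ω : Ω h) : |((Set.ncard {f : Fin h → Fin d |
          1 ≤ eta d h (fun ℓ g => Del h ℓ g ω) f} : ℕ) : ℝ) / (d : ℝ) ^ h - (1 - exp (-c))| =
        |RegularTree.connectedCount (Del h) h ω / d ^ h - exp (-(c / h)) ^ h| := by
      rw [RegularTree.ncard_one_le_eta, hexp, ← abs_neg]
      congr 1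
      field_simp
      ring
    simp only [hdev]
    have := hP h
    exact RegularTree.measure_connectedCount_div_deviation_le (hDelmeas h) (hindep h)
      (by positivity) (hlaw h hh) hd hε
  have hlim : Tendsto (fun h : ℕ => ENNReal.ofReal (c / h / ε ^ 2)) atTop (𝓝 0) := by
    rw [← ENNReal.ofReal_zero, ← zero_div (ε ^ 2)]
    exact ENNReal.tendsto_ofReal ((tendsto_const_div_atTop_nhds_zero_nat c).div_const _)
  exact tendsto_of_tendsto_of_tendsto_of_le_of_le' tendsto_const_nhds hlim
    (.of_forall fun _ => zero_le) ((eventually_ge_atTop 1).mono hbound)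

end
end

section
/- Let c > 0 and p_n = 1 - c/ln n. Let T_n be a uniform random recursive tree on [n], let G_n be the size of the root cluster after Bernoulli bond percolation with parameter p_n on T_n, let u_n be a uniformly chosen vertex of [n] independent of the percolation, and let h_n be the graph distance from u_n to the root in T_n. Then E(n^{-1} G_n) = E( (1 - c/ln n)^{h_n} ), and consequently E(n^{-1} G_n) → e^{-c} as n → ∞. -/
/-!
For `j ≤ k`, whether vertex `j` is connected to the root and its depth depend only on the marks
(parent, deletion flag) of the vertices `1, …, k`, which are independent of the mark of `k + 1`.
Since the parent of `k + 1` is uniform on `{1, …, k}` and the edge to it is kept with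
probability `p = 1 - ε`, both `q_j = P(j ↔ 1)` and `q_j = E[p ^ depth j]` satisfy
`q_1 = 1`, `q_{k+1} = (p / k) ∑_{j ≤ k} q_j`. Hence in both cases `∑_{j ≤ n} q_j / n`
equals `∏_{k < n - 1} (1 - ε / (k + 2))`; this is `E(G_n / n)`, and also `E(p ^ h_n)` because
`u_n` is uniform and independent of the tree. For `ε = c / log n` the product is squeezed between
`exp (-(1 + 2ε) ε (H_n - 1))` and `exp (-ε (H_n - 1))`, and `ε (H_n - 1) → c` since
`H_n - log n` converges.
-/

open MeasureTheory ProbabilityTheory Filter Real Topology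
open scoped ENNReal NNReal

noncomputable section

/-- `connToRoot par del i = true` iff vertex `i` of the tree is connected to the root `1`
after deleting the marked edges.  Here, for `m ≥ 2`, `par m` is the parent of vertex `m`
(a recursive tree has `par m < m`), and `del m = true` means that the edge joining `m`
to its parent is deleted. -/
def connToRoot (par : ℕ → ℕ) (del : ℕ → Bool) : ℕ → Bool
  | 0 => true
  | 1 => true
  | (i + 2) => !(del (i + 2)) && connToRoot par del (min (par (i + 2)) (i + 1))
termination_by i => i
decreasing_by simp_wf

/-- `depthToRoot par i` is the graph distance from vertex `i` to the root `1` in the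
recursive tree with parent function `par`. -/
def depthToRoot (par : ℕ → ℕ) : ℕ → ℕ
  | 0 => 0
  | 1 => 0
  | (i + 2) => depthToRoot par (min (par (i + 2)) (i + 1)) + 1
termination_by i => i
decreasing_by simp_wf

open Finset

theorem connToRoot_of_lt {par : ℕ → ℕ} {del : ℕ → Bool} {m : ℕ} (hm : 2 ≤ m)
    (hpar : par m < m) : connToRoot par del m = (!del m && connToRoot par del (par m)) := by
  obtain ⟨i, rfl⟩ : ∃ i, m = i + 2 := ⟨m - 2, by omega⟩
  rw [connToRoot, min_eq_left (by omega)]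

theorem depthToRoot_of_lt {par : ℕ → ℕ} {m : ℕ} (hm : 2 ≤ m) (hpar : par m < m) :
    depthToRoot par m = depthToRoot par (par m) + 1 := by
  obtain ⟨i, rfl⟩ : ∃ i, m = i + 2 := ⟨m - 2, by omega⟩
  rw [depthToRoot, min_eq_left (by omega)]

theorem ncard_setOf_connToRoot_eq_sum (par : ℕ → ℕ) (del : ℕ → Bool) (n : ℕ) :
    (Set.ncard {i : ℕ | 1 ≤ i ∧ i ≤ n ∧ connToRoot par del i = true} : ℝ) =
      ∑ i ∈ Icc 1 n, if connToRoot par del i then 1 else 0 := by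
  have hset : {i : ℕ | 1 ≤ i ∧ i ≤ n ∧ connToRoot par del i = true} =
      ↑((Icc 1 n).filter fun i => connToRoot par del i = true) := by
    ext i
    simp [and_assoc]
  rw [hset, Set.ncard_coe_finset, card_filter]
  push_cast
  rfl

theorem sum_Icc_eq_mul_prod_of_recursion {q : ℕ → ℝ} {ε : ℝ} {n : ℕ} (h₁ : q 1 = 1)
    (hrec : ∀ k, 1 ≤ k → k + 1 ≤ n → q (k + 1) = (1 - ε) / k * ∑ j ∈ Icc 1 k, q j) {m : ℕ}
    (hm : m + 1 ≤ n) :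
    ∑ i ∈ Icc 1 (m + 1), q i = (m + 1) * ∏ k ∈ range m, (1 - ε / (k + 2)) := by
  induction m with
  | zero => simp [h₁]
  | succ m ih =>
    rw [sum_Icc_succ_top (by omega), hrec (m + 1) (by omega) hm, ih (by omega),
      prod_range_succ]
    push_cast
    field_simp
    ring

theorem exp_neg_mul_le_one_sub {a δ : ℝ} (ha : 0 ≤ a) (haδ : a ≤ δ) (hδ : δ ≤ 1 / 2) :
    exp (-((1 + 2 * δ) * a)) ≤ 1 - a := by
  have hδ₀ : 0 ≤ δ := ha.trans haδ
  have hpos : 0 < 1 + (1 + 2 * δ) * a := by positivity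
  calc exp (-((1 + 2 * δ) * a)) = (exp ((1 + 2 * δ) * a))⁻¹ := Real.exp_neg _
    _ ≤ (1 + (1 + 2 * δ) * a)⁻¹ := by
        gcongr; linarith [Real.add_one_le_exp ((1 + 2 * δ) * a)]
    _ ≤ 1 - a := by
        rw [inv_le_iff_one_le_mul₀ hpos]
        nlinarith [mul_nonneg ha (sub_nonneg.2 haδ),
          mul_nonneg (mul_nonneg ha hδ₀) (by linarith : 0 ≤ 1 - 2 * a)]

theorem tendsto_prod_one_sub_of_tendsto_sum {α ι : Type*} {l : Filter α} {s : α → Finset ι}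
    {a : α → ι → ℝ} {δ : α → ℝ} {c : ℝ} (hδ : Tendsto δ l (𝓝 0))
    (ha : ∀ᶠ x in l, ∀ k ∈ s x, 0 ≤ a x k ∧ a x k ≤ δ x)
    (hsum : Tendsto (fun x => ∑ k ∈ s x, a x k) l (𝓝 c)) :
    Tendsto (fun x => ∏ k ∈ s x, (1 - a x k)) l (𝓝 (exp (-c))) := by
  have hlower : Tendsto (fun x => exp (-((1 + 2 * δ x) * ∑ k ∈ s x, a x k))) l
      (𝓝 (exp (-c))) := by
    simpa using (((tendsto_const_nhds (x := (1 : ℝ))).add (hδ.const_mul 2)).mul hsum).neg.rexp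
  have hsmall := hδ.eventually (ge_mem_nhds (by norm_num : (0 : ℝ) < 1 / 2))
  refine tendsto_of_tendsto_of_tendsto_of_le_of_le' hlower hsum.neg.rexp ?_ ?_ <;>
    filter_upwards [ha, hsmall] with x hax hδx
  · rw [mul_sum, ← sum_neg_distrib, Real.exp_sum]
    exact prod_le_prod (fun k _ => (Real.exp_pos _).le)
      (fun k hk => exp_neg_mul_le_one_sub (hax k hk).1 (hax k hk).2 hδx)
  · rw [← sum_neg_distrib, Real.exp_sum]
    exact prod_le_prod (fun k hk => by linarith [hax k hk])
      (fun k _ => Real.one_sub_le_exp_neg _)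

theorem sum_range_one_div_add_two (n : ℕ) :
    ∑ k ∈ range n, (1 : ℝ) / (k + 2) = harmonic (n + 1) - 1 := by
  rw [harmonic, sum_range_succ']
  push_cast
  simp only [one_div]
  ring_nf

theorem tendsto_harmonic_sub_one_div_log :
    Tendsto (fun n : ℕ => ((harmonic n : ℝ) - 1) / log n) atTop (𝓝 1) := by
  have hlog : Tendsto (fun n : ℕ => log n) atTop atTop :=
    tendsto_log_atTop.comp tendsto_natCast_atTop_atTop
  have hsmall : Tendsto (fun n : ℕ => 1 + ((harmonic n : ℝ) - log n - 1) / log n) atTop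
      (𝓝 1) := by
    simpa using ((tendsto_harmonic_sub_log.sub_const 1).div_atTop hlog).const_add 1
  refine hsmall.congr' ?_
  filter_upwards [hlog.eventually_gt_atTop 0] with n hn
  field_simp
  ring

theorem tendsto_prod_one_sub_div_log {c : ℝ} (hc : 0 ≤ c) :
    Tendsto (fun n : ℕ => ∏ k ∈ range (n - 1), (1 - c / log n / (k + 2))) atTop
      (𝓝 (exp (-c))) := by
  have hlog : Tendsto (fun n : ℕ => log n) atTop atTop :=
    tendsto_log_atTop.comp tendsto_natCast_atTop_atTop
  have hε : Tendsto (fun n : ℕ => c / log n) atTop (𝓝 0) := tendsto_const_nhds.div_atTop hlog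
  refine tendsto_prod_one_sub_of_tendsto_sum hε ?_ ?_
  · filter_upwards [hlog.eventually_ge_atTop 0] with n hn k _
    have hε₀ : 0 ≤ c / log n := div_nonneg hc hn
    exact ⟨by positivity, div_le_self hε₀ (by linarith)⟩
  · have hsum := tendsto_harmonic_sub_one_div_log.const_mul c
    rw [mul_one] at hsum
    refine hsum.congr' ?_
    filter_upwards [eventually_ge_atTop 1] with n hn
    obtain ⟨m, rfl⟩ : ∃ m, n = m + 1 := ⟨n - 1, by omega⟩
    have hsplit : ∑ k ∈ range m, c / log (m + 1 : ℕ) / (k + 2) =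
        c / log (m + 1 : ℕ) * ∑ k ∈ range m, (1 : ℝ) / (k + 2) := by
      rw [mul_sum]
      exact sum_congr rfl fun k _ => by ring
    rw [Nat.add_sub_cancel, hsplit, sum_range_one_div_add_two]
    ring

theorem measurable_apply_of_countable {Ω ι β : Type*} [MeasurableSpace Ω] [MeasurableSpace ι]
    [MeasurableSpace β] [Countable ι] [MeasurableSingletonClass ι] {F : ι → Ω → β}
    (hF : ∀ j, Measurable (F j)) {V : Ω → ι} (hV : Measurable V) :
    Measurable fun ω => F (V ω) ω :=
  (measurable_from_prod_countable_left (f := fun q : Ω × ι => F q.2 q.1) hF).comp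
    (measurable_id.prodMk hV)

theorem measurable_connToRoot {Ω : Type*} [mΩ : MeasurableSpace Ω] {par : ℕ → Ω → ℕ}
    {del : ℕ → Ω → Bool} {i : ℕ} (hpar : ∀ m, 2 ≤ m → m ≤ i → Measurable (par m))
    (hdel : ∀ m, 2 ≤ m → m ≤ i → Measurable (del m)) :
    Measurable fun ω => connToRoot (par · ω) (del · ω) i := by
  induction i using Nat.strong_induction_on with
  | _ i ih =>
    match i with
    | 0 | 1 => simp only [connToRoot]; exact measurable_const
    | i + 2 =>
      simp only [connToRoot]
      have hparent : Measurable fun ω =>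
          connToRoot (par · ω) (del · ω) (min (par (i + 2) ω) (i + 1)) :=
        measurable_apply_of_countable
          (F := fun j ω => connToRoot (par · ω) (del · ω) (min j (i + 1)))
          (fun j => ih _ (by omega) (fun m h₁ h₂ => hpar m h₁ (by omega))
            (fun m h₁ h₂ => hdel m h₁ (by omega)))
          (hpar (i + 2) (by omega) le_rfl)
      exact (measurable_of_countable fun b : Bool × Bool => !b.1 && b.2).comp
        ((hdel (i + 2) (by omega) le_rfl).prodMk hparent)

theorem measurable_depthToRoot {Ω : Type*} [mΩ : MeasurableSpace Ω] {par : ℕ → Ω → ℕ} {i : ℕ}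
    (hpar : ∀ m, 2 ≤ m → m ≤ i → Measurable (par m)) :
    Measurable fun ω => depthToRoot (par · ω) i := by
  induction i using Nat.strong_induction_on with
  | _ i ih =>
    match i with
    | 0 | 1 => simp only [depthToRoot]; exact measurable_const
    | i + 2 =>
      simp only [depthToRoot]
      exact (measurable_apply_of_countable
        (F := fun j ω => depthToRoot (par · ω) (min j (i + 1)))
        (fun j => ih _ (by omega) (fun m h₁ h₂ => hpar m h₁ (by omega)))
        (hpar (i + 2) (by omega) le_rfl)).add_const 1

section

variable {Ω : Type*} [MeasurableSpace Ω] {P : Measure Ω}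

theorem ProbabilityTheory.Indep.indepFun_of_measurable {β γ : Type*} [MeasurableSpace β]
    [MeasurableSpace γ] {m₁ m₂ : MeasurableSpace Ω} {f : Ω → β} {g : Ω → γ} (h : Indep m₁ m₂ P)
    (hf : Measurable[m₁] f) (hg : Measurable[m₂] g) : IndepFun f g P := by
  rw [IndepFun_iff_Indep]
  exact indep_of_indep_of_le_right (indep_of_indep_of_le_left h hf.comap_le) hg.comap_le

theorem integral_mul_apply_eq_sum {V : Ω → ℕ} {W : Ω → ℝ} {F : ℕ → Ω → ℝ} {s : Finset ℕ}
    (hV : Measurable V) (hW : Integrable W P) (hF : ∀ j ∈ s, Integrable (F j) P)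
    (hindep : ∀ j ∈ s, IndepFun (fun ω => (V ω, W ω)) (F j) P)
    (hVs : ∀ᵐ ω ∂P, V ω ∈ s) :
    ∫ ω, W ω * F (V ω) ω ∂P = ∑ j ∈ s, (∫ ω in {ω | V ω = j}, W ω ∂P) * ∫ ω, F j ω ∂P := by
  have hslice : ∀ j ∈ s, IndepFun ({ω | V ω = j}.indicator W) (F j) P := by
    intro j hj
    convert (hindep j hj).comp (φ := fun x : ℕ × ℝ => if x.1 = j then x.2 else 0)
      (ψ := id) (Measurable.ite (measurable_fst (measurableSet_singleton j)) measurable_snd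
        measurable_const) measurable_id using 1
    · ext ω
      simp [Set.indicator_apply]
    · rfl
  have hmeas : ∀ j, MeasurableSet {ω | V ω = j} := fun j => hV (measurableSet_singleton j)
  calc ∫ ω, W ω * F (V ω) ω ∂P
      = ∫ ω, ∑ j ∈ s, {ω | V ω = j}.indicator W ω * F j ω ∂P := by
        refine integral_congr_ae ?_
        filter_upwards [hVs] with ω hω
        rw [sum_eq_single_of_mem _ hω]
        · simp
        · intro j _ hj
          simp [Ne.symm hj]
    _ = ∑ j ∈ s, ∫ ω, {ω | V ω = j}.indicator W ω * F j ω ∂P :=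
        integral_finsetSum _ fun j hj =>
          (hslice j hj).integrable_mul (hW.indicator (hmeas j)) (hF j hj)
    _ = _ := by
        refine sum_congr rfl fun j hj => ?_
        rw [← integral_indicator (hmeas j)]
        exact (hslice j hj).integral_mul_eq_mul_integral
          (hW.indicator (hmeas j)).aestronglyMeasurable (hF j hj).aestronglyMeasurable

theorem integrable_ite_of_measurable [IsFiniteMeasure P] {b : Ω → Bool} (hb : Measurable b)
    (x y : ℝ) : Integrable (fun ω => if b ω then x else y) P :=
  .of_bound (Measurable.ite (hb (measurableSet_singleton true)) measurable_const
    measurable_const).aestronglyMeasurable (max |x| |y|) (ae_of_all _ fun ω => by split <;> simp)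

theorem integrable_pow_of_measurable [IsFiniteMeasure P] {d : Ω → ℕ} (hd : Measurable d) {x : ℝ}
    (hx₀ : 0 ≤ x) (hx₁ : x ≤ 1) : Integrable (fun ω => x ^ d ω) P :=
  .of_bound ((measurable_of_countable (x ^ ·)).comp hd).aestronglyMeasurable 1
    (ae_of_all _ fun ω => by
      rw [Real.norm_eq_abs, abs_of_nonneg (by positivity)]
      exact pow_le_one₀ hx₀ hx₁)

theorem ae_mem_of_measure_eq_inv_card [IsProbabilityMeasure P] {V : Ω → ℕ} {s : Finset ℕ}
    (hV : Measurable V) (hs : s.Nonempty) (h : ∀ j ∈ s, P {ω | V ω = j} = (#s : ℝ≥0∞)⁻¹) :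
    ∀ᵐ ω ∂P, V ω ∈ s := by
  rw [ae_iff_measure_eq (p := fun ω => V ω ∈ s) (hV s.measurableSet).nullMeasurableSet,
    measure_univ]
  calc P {ω | V ω ∈ s} = ∑ j ∈ s, P {ω | V ω = j} :=
        (sum_measure_preimage_singleton s fun j _ => hV (measurableSet_singleton j)).symm
    _ = ∑ j ∈ s, (#s : ℝ≥0∞)⁻¹ := sum_congr rfl h
    _ = 1 := by
        rw [sum_const, nsmul_eq_mul, ENNReal.mul_inv_cancel (by simp [hs.ne_empty]) (by simp)]

end

section Model

variable {Ω : Type*} (U : ℕ → Ω → ℕ) (Del : ℕ → Ω → Bool) (u : Ω → ℕ)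

-- The mark of a vertex `m ≥ 1` is its parent and deletion flag; the index `0`, which is not a
-- vertex, carries the uniform vertex `u`.
def vertexMarks (m : ℕ) (ω : Ω) : ℕ × Bool :=
  if m = 0 then (u ω, false) else (U m ω, Del m ω)

abbrev marksSigma (S : Set ℕ) : MeasurableSpace Ω :=
  ⨆ m ∈ S, MeasurableSpace.comap (vertexMarks U Del u m) inferInstance

variable {U Del u}

theorem measurable_vertexMarks [MeasurableSpace Ω] (hU : ∀ m, Measurable (U m))
    (hDel : ∀ m, Measurable (Del m)) (hu : Measurable u) (m : ℕ) :
    Measurable (vertexMarks U Del u m) := by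
  unfold vertexMarks
  split_ifs
  · exact hu.prodMk measurable_const
  · exact (hU m).prodMk (hDel m)

theorem indep_marksSigma [MeasurableSpace Ω] {P : Measure Ω} (hU : ∀ m, Measurable (U m))
    (hDel : ∀ m, Measurable (Del m)) (hu : Measurable u) (hind : iIndepFun (vertexMarks U Del u) P)
    {S T : Set ℕ} (hST : Disjoint S T) : Indep (marksSigma U Del u S) (marksSigma U Del u T) P :=
  indep_iSup_of_disjoint (fun m => (measurable_vertexMarks hU hDel hu m).comap_le) hind.iIndep hST

theorem measurable_marksSigma {S : Set ℕ} {m : ℕ} (hm : m ∈ S) :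
    Measurable[marksSigma U Del u S] (vertexMarks U Del u m) :=
  Measurable.of_comap_le <|
    le_iSup₂ (f := fun m _ => MeasurableSpace.comap (vertexMarks U Del u m) inferInstance) m hm

theorem measurable_parent_marksSigma {S : Set ℕ} {m : ℕ} (hm : m ∈ S) (hm₀ : m ≠ 0) :
    Measurable[marksSigma U Del u S] (U m) := by
  convert (measurable_marksSigma hm).fst using 1
  funext ω
  simp [vertexMarks, hm₀]

theorem measurable_deleted_marksSigma {S : Set ℕ} {m : ℕ} (hm : m ∈ S) (hm₀ : m ≠ 0) :
    Measurable[marksSigma U Del u S] (Del m) := by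
  convert (measurable_marksSigma hm).snd using 1
  funext ω
  simp [vertexMarks, hm₀]

theorem measurable_vertex_marksSigma {S : Set ℕ} (h₀ : 0 ∈ S) :
    Measurable[marksSigma U Del u S] u :=
  (measurable_marksSigma h₀).fst

theorem measurable_connToRoot_marksSigma {j k : ℕ} (hjk : j ≤ k) :
    Measurable[marksSigma U Del u (Set.Icc 1 k)] fun ω => connToRoot (U · ω) (Del · ω) j :=
  measurable_connToRoot (mΩ := marksSigma U Del u _)
    (fun m h₁ h₂ => measurable_parent_marksSigma ⟨by omega, by omega⟩ (by omega))
    (fun m h₁ h₂ => measurable_deleted_marksSigma ⟨by omega, by omega⟩ (by omega))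

theorem measurable_depthToRoot_marksSigma {j k : ℕ} (hjk : j ≤ k) :
    Measurable[marksSigma U Del u (Set.Icc 1 k)] fun ω => depthToRoot (U · ω) j :=
  measurable_depthToRoot (mΩ := marksSigma U Del u _) fun m h₁ h₂ =>
    measurable_parent_marksSigma ⟨by omega, by omega⟩ (by omega)

end Model

section Percolation

variable {Ω : Type*} [MeasurableSpace Ω] {P : Measure Ω}

structure IsPercolatedRecursiveTree (P : Measure Ω) (U : ℕ → Ω → ℕ) (Del : ℕ → Ω → Bool)
    (u : Ω → ℕ) (n : ℕ) (ε : ℝ) : Prop where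
  measurable_parent : ∀ m, Measurable (U m)
  measurable_deleted : ∀ m, Measurable (Del m)
  measurable_vertex : Measurable u
  iIndepFun_vertexMarks : iIndepFun (vertexMarks U Del u) P
  parent_deleted_law : ∀ m, 2 ≤ m → m ≤ n → ∀ j ∈ Icc 1 (m - 1), ∀ b : Bool,
    P {ω | U m ω = j ∧ Del m ω = b} =
      ((m - 1 : ℕ) : ℝ≥0∞)⁻¹ * (if b then ENNReal.ofReal ε else ENNReal.ofReal (1 - ε))
  vertex_law : ∀ j ∈ Icc 1 n, P {ω | u ω = j} = (n : ℝ≥0∞)⁻¹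

namespace IsPercolatedRecursiveTree

variable {U : ℕ → Ω → ℕ} {Del : ℕ → Ω → Bool} {u : Ω → ℕ} {n : ℕ} {ε : ℝ}
  (hT : IsPercolatedRecursiveTree P U Del u n ε) {k : ℕ}
include hT

theorem indepFun {β γ : Type*} [MeasurableSpace β] [MeasurableSpace γ] {i : ℕ}
    (hi : i ∉ Set.Icc 1 k) {f : Ω → β} {g : Ω → γ} (hf : Measurable[marksSigma U Del u {i}] f)
    (hg : Measurable[marksSigma U Del u (Set.Icc 1 k)] g) : IndepFun f g P :=
  (indep_marksSigma hT.measurable_parent hT.measurable_deleted hT.measurable_vertex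
    hT.iIndepFun_vertexMarks (Set.disjoint_singleton_left.2 hi)).indepFun_of_measurable hf hg

theorem measure_parent_eq (hε₀ : 0 ≤ ε) (hε₁ : ε ≤ 1) (hk : 1 ≤ k) (hkn : k + 1 ≤ n) {j : ℕ}
    (hj : j ∈ Icc 1 k) : P {ω | U (k + 1) ω = j} = (k : ℝ≥0∞)⁻¹ := by
  have hlaw := hT.parent_deleted_law (k + 1) (by omega) hkn j (by simpa using hj)
  have hsplit : {ω | U (k + 1) ω = j} =
      {ω | U (k + 1) ω = j ∧ Del (k + 1) ω = true} ∪
        {ω | U (k + 1) ω = j ∧ Del (k + 1) ω = false} := by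
    ext ω
    by_cases h : Del (k + 1) ω <;> simp [h]
  have hkept : MeasurableSet {ω | U (k + 1) ω = j ∧ Del (k + 1) ω = false} :=
    (hT.measurable_parent _ (measurableSet_singleton j)).inter
      (hT.measurable_deleted _ (measurableSet_singleton false))
  rw [hsplit, measure_union (Set.disjoint_left.2 fun ω h₁ h₂ => by simp_all) hkept, hlaw true,
    hlaw false]
  simp only [if_true, Bool.false_eq_true, if_false, Nat.add_sub_cancel]
  rw [← mul_add, ← ENNReal.ofReal_add hε₀ (by linarith), add_sub_cancel, ENNReal.ofReal_one,
    mul_one]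

theorem setIntegral_not_deleted (hε₁ : ε ≤ 1) (hk : 1 ≤ k) (hkn : k + 1 ≤ n) {j : ℕ}
    (hj : j ∈ Icc 1 k) :
    ∫ ω in {ω | U (k + 1) ω = j}, (if Del (k + 1) ω then 0 else 1 : ℝ) ∂P = (1 - ε) / k := by
  have hkept : MeasurableSet {ω | Del (k + 1) ω = false} :=
    hT.measurable_deleted _ (measurableSet_singleton false)
  have hind : (fun ω => if Del (k + 1) ω then (0 : ℝ) else 1) =
      {ω | Del (k + 1) ω = false}.indicator 1 := by
    ext ω
    by_cases h : Del (k + 1) ω <;> simp [h]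
  rw [hind, integral_indicator_one hkept, measureReal_restrict_apply hkept, Set.inter_comm,
    ← Set.ofPred_and, measureReal_def,
    hT.parent_deleted_law (k + 1) (by omega) hkn j (by simpa using hj) false]
  simp [ENNReal.toReal_ofReal (sub_nonneg.2 hε₁), div_eq_inv_mul]

theorem setIntegral_parent_const (hε₀ : 0 ≤ ε) (hε₁ : ε ≤ 1) (hk : 1 ≤ k) (hkn : k + 1 ≤ n)
    {j : ℕ} (hj : j ∈ Icc 1 k) (x : ℝ) :
    ∫ _ in {ω | U (k + 1) ω = j}, x ∂P = x / k := by
  rw [setIntegral_const, measureReal_def, hT.measure_parent_eq hε₀ hε₁ hk hkn hj]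
  simp [div_eq_inv_mul]

theorem setIntegral_vertex_one {j : ℕ} (hj : j ∈ Icc 1 n) :
    ∫ _ in {ω | u ω = j}, (1 : ℝ) ∂P = 1 / n := by
  rw [setIntegral_const, measureReal_def, hT.vertex_law j hj]
  simp

variable [IsProbabilityMeasure P]

theorem ae_parent_mem (hε₀ : 0 ≤ ε) (hε₁ : ε ≤ 1) (hk : 1 ≤ k) (hkn : k + 1 ≤ n) :
    ∀ᵐ ω ∂P, U (k + 1) ω ∈ Icc 1 k :=
  ae_mem_of_measure_eq_inv_card (hT.measurable_parent _) ⟨1, by simpa using hk⟩ fun j hj => by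
    rw [Nat.card_Icc, Nat.add_sub_cancel]
    exact hT.measure_parent_eq hε₀ hε₁ hk hkn hj

theorem ae_vertex_mem (hn : 1 ≤ n) : ∀ᵐ ω ∂P, u ω ∈ Icc 1 n :=
  ae_mem_of_measure_eq_inv_card hT.measurable_vertex ⟨1, by simpa using hn⟩ fun j hj => by
    rw [Nat.card_Icc, Nat.add_sub_cancel]
    exact hT.vertex_law j hj

theorem integral_connToRoot_succ (hε₀ : 0 ≤ ε) (hε₁ : ε ≤ 1) (hk : 1 ≤ k) (hkn : k + 1 ≤ n) :
    ∫ ω, (if connToRoot (U · ω) (Del · ω) (k + 1) then 1 else 0 : ℝ) ∂P =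
      (1 - ε) / k *
        ∑ j ∈ Icc 1 k, ∫ ω, (if connToRoot (U · ω) (Del · ω) j then 1 else 0 : ℝ) ∂P := by
  have hparent := hT.ae_parent_mem hε₀ hε₁ hk hkn
  have hrec : (fun ω => if connToRoot (U · ω) (Del · ω) (k + 1) then (1 : ℝ) else 0) =ᵐ[P]
      fun ω => (if Del (k + 1) ω then 0 else 1) *
        (if connToRoot (U · ω) (Del · ω) (U (k + 1) ω) then 1 else 0) := by
    filter_upwards [hparent] with ω hω
    rw [connToRoot_of_lt (by omega) (by simp at hω; omega)]
    by_cases h : Del (k + 1) ω <;> simp [h]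
  have hkept : Measurable[marksSigma U Del u {k + 1}]
      fun ω => if Del (k + 1) ω then (0 : ℝ) else 1 :=
    Measurable.ite (measurable_deleted_marksSigma (Set.mem_singleton _) (by omega)
      (measurableSet_singleton true)) measurable_const measurable_const
  have hconn : ∀ j ≤ k, Measurable[marksSigma U Del u (Set.Icc 1 k)]
      fun ω => if connToRoot (U · ω) (Del · ω) j then (1 : ℝ) else 0 := fun j hj =>
    Measurable.ite (measurable_connToRoot_marksSigma hj (measurableSet_singleton true))
      measurable_const measurable_const
  rw [integral_congr_ae hrec, integral_mul_apply_eq_sum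
    (F := fun j ω => if connToRoot (U · ω) (Del · ω) j then (1 : ℝ) else 0)
    (hT.measurable_parent _) ?_ ?_ ?_ hparent, mul_sum]
  · refine sum_congr rfl fun j hj => ?_
    rw [hT.setIntegral_not_deleted hε₁ hk hkn hj]
  · exact integrable_ite_of_measurable (hT.measurable_deleted _) 0 1
  · exact fun j _ => integrable_ite_of_measurable (measurable_connToRoot
      (fun m _ _ => hT.measurable_parent m) (fun m _ _ => hT.measurable_deleted m)) 1 0
  · exact fun j hj => hT.indepFun (by simp)
      ((measurable_parent_marksSigma (Set.mem_singleton _) (by omega)).prodMk hkept)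
      (hconn j (mem_Icc.1 hj).2)

theorem integral_pow_depthToRoot_succ (hε₀ : 0 ≤ ε) (hε₁ : ε ≤ 1) (hk : 1 ≤ k)
    (hkn : k + 1 ≤ n) :
    ∫ ω, (1 - ε) ^ depthToRoot (U · ω) (k + 1) ∂P =
      (1 - ε) / k * ∑ j ∈ Icc 1 k, ∫ ω, (1 - ε) ^ depthToRoot (U · ω) j ∂P := by
  have hparent := hT.ae_parent_mem hε₀ hε₁ hk hkn
  have hrec : (fun ω => (1 - ε) ^ depthToRoot (U · ω) (k + 1)) =ᵐ[P]
      fun ω => (1 - ε) * (1 - ε) ^ depthToRoot (U · ω) (U (k + 1) ω) := by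
    filter_upwards [hparent] with ω hω
    rw [depthToRoot_of_lt (by omega) (by simp at hω; omega), pow_succ, mul_comm]
  rw [integral_congr_ae hrec, integral_mul_apply_eq_sum
    (F := fun j ω => (1 - ε) ^ depthToRoot (U · ω) j)
    (hT.measurable_parent _) (integrable_const _) ?_ ?_ hparent, mul_sum]
  · refine sum_congr rfl fun j hj => ?_
    rw [hT.setIntegral_parent_const hε₀ hε₁ hk hkn hj]
  · exact fun j _ => integrable_pow_of_measurable
      (measurable_depthToRoot fun m _ _ => hT.measurable_parent m) (by linarith) (by linarith)
  · exact fun j hj => hT.indepFun (by simp)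
      ((measurable_parent_marksSigma (Set.mem_singleton _) (by omega)).prodMk measurable_const)
      ((measurable_of_countable _).comp (measurable_depthToRoot_marksSigma (mem_Icc.1 hj).2))

theorem integral_pow_depthToRoot_vertex (hε₀ : 0 ≤ ε) (hε₁ : ε ≤ 1) (hn : 1 ≤ n) :
    ∫ ω, (1 - ε) ^ depthToRoot (U · ω) (u ω) ∂P =
      (∑ j ∈ Icc 1 n, ∫ ω, (1 - ε) ^ depthToRoot (U · ω) j ∂P) / n := by
  have h := integral_mul_apply_eq_sum (W := fun _ => (1 : ℝ))
    (F := fun j ω => (1 - ε) ^ depthToRoot (U · ω) j)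
    hT.measurable_vertex (integrable_const _) (fun j _ => integrable_pow_of_measurable
      (measurable_depthToRoot fun m _ _ => hT.measurable_parent m) (by linarith) (by linarith))
    (fun j hj => hT.indepFun (k := n) (by simp)
      ((measurable_vertex_marksSigma (Set.mem_singleton _)).prodMk measurable_const)
      ((measurable_of_countable _).comp (measurable_depthToRoot_marksSigma (mem_Icc.1 hj).2)))
    (hT.ae_vertex_mem hn)
  simp only [one_mul] at h
  rw [h, sum_div]
  refine sum_congr rfl fun j hj => ?_
  rw [hT.setIntegral_vertex_one hj]
  ring

theorem integral_ncard_connToRoot_div_eq_prod (hε₀ : 0 ≤ ε) (hε₁ : ε ≤ 1) (hn : 1 ≤ n) :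
    ∫ ω, (Set.ncard {i : ℕ | 1 ≤ i ∧ i ≤ n ∧ connToRoot (U · ω) (Del · ω) i = true} : ℝ) / n
      ∂P =
      ∏ k ∈ range (n - 1), (1 - ε / (k + 2)) := by
  obtain ⟨m, rfl⟩ : ∃ m, n = m + 1 := ⟨n - 1, by omega⟩
  simp_rw [ncard_setOf_connToRoot_eq_sum]
  rw [integral_div, integral_finsetSum _ fun i _ => integrable_ite_of_measurable
      (measurable_connToRoot (fun m _ _ => hT.measurable_parent m)
        (fun m _ _ => hT.measurable_deleted m)) 1 0,
    sum_Icc_eq_mul_prod_of_recursion (by simp [connToRoot])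
      (fun k hk hkn => hT.integral_connToRoot_succ hε₀ hε₁ hk hkn) le_rfl]
  push_cast
  field_simp

theorem integral_pow_depthToRoot_vertex_eq_prod (hε₀ : 0 ≤ ε) (hε₁ : ε ≤ 1) (hn : 1 ≤ n) :
    ∫ ω, (1 - ε) ^ depthToRoot (U · ω) (u ω) ∂P = ∏ k ∈ range (n - 1), (1 - ε / (k + 2)) := by
  obtain ⟨m, rfl⟩ : ∃ m, n = m + 1 := ⟨n - 1, by omega⟩
  rw [hT.integral_pow_depthToRoot_vertex hε₀ hε₁ hn,
    sum_Icc_eq_mul_prod_of_recursion (by simp [depthToRoot])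
      (fun k hk hkn => hT.integral_pow_depthToRoot_succ hε₀ hε₁ hk hkn) le_rfl]
  push_cast
  field_simp

end IsPercolatedRecursiveTree

end Percolation

theorem first_moment_of_giant_cluster
    (c : ℝ) (hc : 0 < c)
    -- for each `n`, a probability space carrying the percolated random recursive tree
    -- and an independent uniform vertex
    (Ω : ℕ → Type) (mΩ : ∀ n, MeasurableSpace (Ω n))
    (P : ∀ n, Measure (Ω n)) (hP : ∀ n, IsProbabilityMeasure (P n))
    -- `U n m` = parent of vertex `m` (for `2 ≤ m ≤ n`); `Del n m` = "edge from `m` deleted";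
    -- `u n` = a uniform random vertex of `[n]`
    (U : ∀ n, ℕ → Ω n → ℕ) (Del : ∀ n, ℕ → Ω n → Bool) (u : ∀ n, Ω n → ℕ)
    (hUmeas : ∀ n m, Measurable (U n m)) (hDelmeas : ∀ n m, Measurable (Del n m))
    (humeas : ∀ n, Measurable (u n))
    -- the pairs (parent, deletion mark) of the different vertices and the uniform vertex
    -- `u n` (labelled by the otherwise unused index `0`) are mutually independent
    (hindep : ∀ n, iIndepFun
      (fun m ω => if m = 0 then (u n ω, false) else (U n m ω, Del n m ω)) (P n))
    -- for `2 ≤ m ≤ n` (and `n` with `c ≤ log n`, so that `p_n = 1 - c/log n ∈ [0,1]`):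
    -- the parent of `m` is uniform on `{1, …, m-1}` and, independently, the edge from `m`
    -- is deleted with probability `1 - p_n = c / log n`
    (hlaw : ∀ n : ℕ, c ≤ Real.log n → ∀ m : ℕ, 2 ≤ m → m ≤ n →
      ∀ j ∈ Finset.Icc 1 (m - 1), ∀ b : Bool,
      P n {ω | U n m ω = j ∧ Del n m ω = b} =
        (((m - 1 : ℕ) : ℝ≥0∞))⁻¹ *
          (if b then ENNReal.ofReal (c / Real.log n)
            else ENNReal.ofReal (1 - c / Real.log n)))
    -- `u n` is uniform on `{1, …, n}`
    (hulaw : ∀ n : ℕ, 1 ≤ n → ∀ j ∈ Finset.Icc 1 n,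
      P n {ω | u n ω = j} = ((n : ℝ≥0∞))⁻¹)
    -- `G n` = size of the root cluster, `h n` = height of the uniform vertex `u n`
    (G : ∀ n, Ω n → ℕ) (h : ∀ n, Ω n → ℕ)
    (hG : ∀ n ω, G n ω = Set.ncard {i : ℕ | 1 ≤ i ∧ i ≤ n ∧
      connToRoot (fun m => U n m ω) (fun m => Del n m ω) i = true})
    (hh : ∀ n ω, h n ω = depthToRoot (fun m => U n m ω) (u n ω)) :
    -- conclusions: `E(n⁻¹ G_n) = E(p_n^{h_n})` in the supercritical regime, and
    -- `E(n⁻¹ G_n) → e^{-c}`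
    (∀ n : ℕ, c ≤ Real.log n →
      ∫ ω, (G n ω : ℝ) / n ∂(P n) = ∫ ω, (1 - c / Real.log n) ^ (h n ω) ∂(P n)) ∧
    Tendsto (fun n : ℕ => ∫ ω, (G n ω : ℝ) / n ∂(P n)) atTop (𝓝 (Real.exp (-c))) := by
  have hn₁ : ∀ n : ℕ, c ≤ log n → 1 ≤ n := fun n hn =>
    Nat.one_le_iff_ne_zero.2 fun h => by simp [h] at hn; linarith
  have hε : ∀ n : ℕ, c ≤ log n → 0 ≤ c / log n ∧ c / log n ≤ 1 := fun n hn =>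
    ⟨div_nonneg hc.le (hc.le.trans hn), div_le_one_of_le₀ hn (hc.le.trans hn)⟩
  have hT : ∀ n : ℕ, c ≤ log n →
      IsPercolatedRecursiveTree (P n) (U n) (Del n) (u n) n (c / log n) := fun n hn =>
    ⟨hUmeas n, hDelmeas n, humeas n, hindep n, hlaw n hn, hulaw n (hn₁ n hn)⟩
  have hcluster : ∀ n : ℕ, c ≤ log n →
      ∫ ω, (G n ω : ℝ) / n ∂(P n) = ∏ k ∈ range (n - 1), (1 - c / log n / (k + 2)) :=
    fun n hn => by
      simp only [hG]
      exact (hT n hn).integral_ncard_connToRoot_div_eq_prod (hε n hn).1 (hε n hn).2 (hn₁ n hn)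
  have hheight : ∀ n : ℕ, c ≤ log n →
      ∫ ω, (1 - c / log n) ^ (h n ω) ∂(P n) = ∏ k ∈ range (n - 1), (1 - c / log n / (k + 2)) :=
    fun n hn => by
      simp only [hh]
      exact (hT n hn).integral_pow_depthToRoot_vertex_eq_prod (hε n hn).1 (hε n hn).2 (hn₁ n hn)
  refine ⟨fun n hn => (hcluster n hn).trans (hheight n hn).symm, ?_⟩
  refine (tendsto_prod_one_sub_div_log hc.le).congr' ?_
  filter_upwards [(tendsto_log_atTop.comp tendsto_natCast_atTop_atTop).eventually_ge_atTop c]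
    with n hn
  exact (hcluster n hn).symm

end
end
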